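/- arXiv:1606.08944 — 2 statements merged into one kernel-verified Lean document; each statement's English description precedes it below -/
import Mathlib

section
/- Let n be coprime to 6 with n > 10 (so that (1)(n−4)(n−3)(6) is a minimal zero-sum sequence over Z/n). Then ind((1)(n−4)(n−3)(6)) = 1. -/
/-- `S = (x1)(x2)(x3)(x4)` is a minimal zero-sum sequence over `ℤ/n`:
all entries lie in `[1, n)`, the total sum is `≡ 0 (mod n)`, and no proper
nonempty subsequence sums to `0 (mod n)`. -/
def IsMinZS4 (n x1 x2 x3 x4 : ℕ) : Prop :=
  (1 ≤ x1 ∧ x1 < n) ∧ (1 ≤ x2 ∧ x2 < n) ∧ (1 ≤ x3 ∧ x3 < n) ∧ (1 ≤ x4 ∧ x4 < n) ∧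
  (x1 + x2 + x3 + x4) % n = 0 ∧
  (x1 + x2) % n ≠ 0 ∧ (x1 + x3) % n ≠ 0 ∧ (x1 + x4) % n ≠ 0 ∧
  (x2 + x3) % n ≠ 0 ∧ (x2 + x4) % n ≠ 0 ∧ (x3 + x4) % n ≠ 0 ∧
  (x1 + x2 + x3) % n ≠ 0 ∧ (x1 + x2 + x4) % n ≠ 0 ∧
  (x1 + x3 + x4) % n ≠ 0 ∧ (x2 + x3 + x4) % n ≠ 0

/-- Sum of least nonnegative residues of the `g·xᵢ` mod `n`;
this equals `n·‖S‖_{g⁻¹}` for a unit `g` of `ℤ/n`. -/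
def normSum (n g x1 x2 x3 x4 : ℕ) : ℕ :=
  (x1 * g) % n + (x2 * g) % n + (x3 * g) % n + (x4 * g) % n

/-- The index of `S`: the minimum of `‖S‖_g` over generators `g` of `ℤ/n`. -/
noncomputable def seqIndex (n x1 x2 x3 x4 : ℕ) : ℕ :=
  sInf {m : ℕ | ∃ g, g < n ∧ Nat.Coprime g n ∧ normSum n g x1 x2 x3 x4 = m * n}

/-- `k` is good: `k` is a power of `2`, `k < n/6`, and
`F(k) = (2n − 2 − 2⌊((3k−1)/(3k))·n⌋)·k > (n−1)/2`. -/
def IsGood (n k : ℕ) : Prop :=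
  (∃ l, k = 2 ^ l) ∧ 6 * k < n ∧
    (n - 1) / 2 < (2 * n - 2 - 2 * ((3 * k - 1) * n / (3 * k))) * k

/-! The unit `g = ⌊n/4⌋` works. Writing `n = 4g + r`, oddness of `n` gives `r ∈ {1, 3}`, so `r` is
coprime to `n` and hence so is `g`. Since `n/6 ≤ g ≤ n/4`, the residues of `g, (n-4)g, (n-3)g, 6g`
are `g, n-4g, n-3g, 6g-n`, which sum to `n`. -/

theorem Nat.Coprime.of_mul_add_eq {a g r n : ℕ} (h : a * g + r = n) (hr : Nat.Coprime r n) :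
    Nat.Coprime g n := by
  have hdvd : Nat.gcd g n ∣ r :=
    (Nat.dvd_add_right (dvd_mul_of_dvd_right (Nat.gcd_dvd_left g n) a)).mp
      (h ▸ Nat.gcd_dvd_right g n)
  exact (hr.coprime_dvd_left hdvd).eq_one_of_dvd (Nat.gcd_dvd_right g n)

theorem Nat.coprime_div_four_self {n : ℕ} (h6 : Nat.Coprime n 6) : Nat.Coprime (n / 4) n := by
  have hodd : n % 2 = 1 := Nat.odd_iff.mp (h6.coprime_dvd_right (by norm_num)).odd_of_right
  have h3 : Nat.Coprime 3 n := (h6.coprime_dvd_right (by norm_num)).symm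
  have hr : n % 4 ∣ 3 := by
    rcases (by omega : n % 4 = 1 ∨ n % 4 = 3) with h | h <;> simp [h]
  exact Nat.Coprime.of_mul_add_eq (Nat.div_add_mod n 4) (h3.coprime_dvd_left hr)

theorem Nat.sub_mul_mod_self {n a g : ℕ} (hpos : 0 < a * g) (hle : a * g ≤ n) :
    (n - a) * g % n = n - a * g := by
  have hg : 1 ≤ g := Nat.pos_of_mul_pos_left hpos
  have ha : a ≤ n := le_trans (Nat.le_mul_of_pos_right a hg) hle
  have hsplit : (n - a) * g = n * (g - 1) + (n - a * g) := by
    zify [ha, hg, hle]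
    ring
  rw [hsplit, Nat.mul_add_mod, Nat.mod_eq_of_lt (by omega)]

theorem normSum_eq_self {n g : ℕ} (hg : 0 < g) (h4 : 4 * g ≤ n) (h6 : n ≤ 6 * g) :
    normSum n g 1 (n - 4) (n - 3) 6 = n := by
  have e1 : 1 * g % n = g := by rw [one_mul, Nat.mod_eq_of_lt (by omega)]
  have e2 : (n - 4) * g % n = n - 4 * g := Nat.sub_mul_mod_self (by omega) h4
  have e3 : (n - 3) * g % n = n - 3 * g := Nat.sub_mul_mod_self (by omega) (by omega)
  have e4 : 6 * g % n = 6 * g - n := by rw [Nat.mod_eq_sub_mod h6, Nat.mod_eq_of_lt (by omega)]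
  rw [normSum, e1, e2, e3, e4]
  omega

theorem normSum_pos {n g x1 : ℕ} (x2 x3 x4 : ℕ) (hn : 1 < n) (hg : Nat.Coprime g n)
    (hx1 : Nat.Coprime x1 n) : 0 < normSum n g x1 x2 x3 x4 := by
  have hres : x1 * g % n ≠ 0 := fun h =>
    hn.ne' ((hx1.mul_left hg).symm.eq_one_of_dvd (Nat.dvd_of_mod_eq_zero h))
  unfold normSum
  omega

theorem seqIndex_eq_one {n x1 x2 x3 x4 g : ℕ} (hn : 1 < n) (hx1 : Nat.Coprime x1 n)
    (hgn : g < n) (hg : Nat.Coprime g n) (hsum : normSum n g x1 x2 x3 x4 = n) :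
    seqIndex n x1 x2 x3 x4 = 1 := by
  have hmem : 1 ∈ {m : ℕ | ∃ g, g < n ∧ Nat.Coprime g n ∧ normSum n g x1 x2 x3 x4 = m * n} :=
    ⟨g, hgn, hg, by rw [hsum, one_mul]⟩
  refine le_antisymm (Nat.sInf_le hmem) (Nat.one_le_iff_ne_zero.mpr fun h0 => ?_)
  rcases Nat.sInf_eq_zero.mp h0 with ⟨g', -, hg', hsum'⟩ | hempty
  · exact (normSum_pos x2 x3 x4 hn hg' hx1).ne' (by rw [hsum', zero_mul])
  · exact Set.not_nonempty_iff_eq_empty.mpr hempty ⟨1, hmem⟩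

theorem stmt_14 (n : ℕ) (hn : 10 < n) (h6 : Nat.Coprime n 6) :
    seqIndex n 1 (n - 4) (n - 3) 6 = 1 :=
  seqIndex_eq_one (by omega) (Nat.coprime_one_left n) (by omega) (Nat.coprime_div_four_self h6)
    (normSum_eq_self (by omega) (by omega) (by omega))
end

section
/- Let n be coprime to 6 and S = (x1)(x2)(x3)(x4) a minimal zero-sum sequence over Z/n with 1 ≤ xi < n, x1 = 1, gcd(xi,n) = 1 for all i, and either x3 = x2 + 1 or x2 = n − 2. Then ind(S) = 1. -/
/-!
Since `S` sums to `0 mod n`, every `normSum n g 1 x₂ x₃ x₄` is a multiple of `n`, and it is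
positive for a unit `g` because the residue of `g · 1` is nonzero; so it suffices to find a unit
`G` for which the residues of the `G xᵢ` add up to less than `2n`.

The key input: if `y ∉ {0, ±1, 1/2}` in `ℤ/n` and `gcd(n, 6) = 1`, there is a unit `g` with
`g < (g y mod n) < n/2`. For `2y < n` take `g = 1`, for `2(2y - n) < n` take `g = 2`; otherwise
`y = n - z` with `4z < n`, and any unit `g ∈ (n/2z, n/(z+1))` works. A `3`-smooth one exists
(a unit since `gcd(n, 6) = 1`) because beyond `6` consecutive `3`-smooth numbers differ by a
factor of at most `4/3`.

If `x₃ = x₂ + 1`, apply this to `y = x₃` and take `G = g`: the residues are `g, c - g, c, r`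
with `c < n/2`. If `x₂ = n - 2`, apply it to `y = x₃⁻¹` and take `G = g y mod n`: the residues
are `G, n - 2G, g, r` with `g < G`.
-/

open Nat

lemma Nat.Coprime.two_pow_mul_three_pow {n : ℕ} (h6 : Coprime n 6) (a b : ℕ) :
    Coprime (2 ^ a * 3 ^ b) n := by
  obtain ⟨h2, h3⟩ := Nat.coprime_mul_iff_right.1 (show Coprime n (2 * 3) from h6)
  exact (h2.symm.pow_left a).mul_left (h3.symm.pow_left b)

lemma Nat.Coprime.mod_two_mod_three {n : ℕ} (h6 : Coprime n 6) : n % 2 = 1 ∧ n % 3 ≠ 0 := by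
  obtain ⟨h2, h3⟩ := Nat.coprime_mul_iff_right.1 (show Coprime n (2 * 3) from h6)
  refine ⟨Nat.odd_iff.1 (Nat.coprime_two_right.1 h2), fun h => ?_⟩
  exact (Nat.Prime.coprime_iff_not_dvd Nat.prime_three).1 h3.symm (Nat.dvd_of_mod_eq_zero h)

lemma exists_two_pow_mul_three_pow_between {A : ℕ} (hA : 6 ≤ A) :
    ∃ a b : ℕ, A < 2 ^ a * 3 ^ b ∧ 3 * (2 ^ a * 3 ^ b) ≤ 4 * A := by
  induction A using Nat.strong_induction_on with
  | _ A ih =>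
    by_cases h12 : A < 12
    · interval_cases A
      · exact ⟨3, 0, by norm_num⟩
      · exact ⟨3, 0, by norm_num⟩
      · exact ⟨0, 2, by norm_num⟩
      · exact ⟨2, 1, by norm_num⟩
      · exact ⟨2, 1, by norm_num⟩
      · exact ⟨2, 1, by norm_num⟩
    · obtain ⟨a, b, hlt, hle⟩ := ih (A / 2) (by omega) (by omega)
      refine ⟨a + 1, b, ?_⟩
      rw [pow_succ, mul_right_comm]
      omega

/-- Writing `n = 2zA + m`, any `g ∈ (A, 4A/3]` lies in the required interval. -/
lemma exists_coprime_between {n z : ℕ} (h6 : Coprime n 6) (hz : 2 ≤ z) (hzn : 4 * z < n) :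
    ∃ g, Coprime g n ∧ n < 2 * z * g ∧ (z + 1) * g < n := by
  have hn3 := h6.mod_two_mod_three.2
  obtain ⟨A, m, hm, hn⟩ : ∃ A m, m < 2 * z ∧ n = 2 * z * A + m :=
    ⟨n / (2 * z), n % (2 * z), Nat.mod_lt _ (by omega), (Nat.div_add_mod n (2 * z)).symm⟩
  have hm0 : 0 < m := by
    rcases Nat.eq_zero_or_pos m with rfl | h
    · have hn2 := h6.mod_two_mod_three.1
      rw [hn, add_zero, mul_assoc, Nat.mul_mod_right] at hn2
      omega
    · exact h
  have hA2 : 2 ≤ A := by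
    by_contra! h
    interval_cases A <;> omega
  by_cases hA6 : 6 ≤ A
  · obtain ⟨a, b, hlt, hle⟩ := exists_two_pow_mul_three_pow_between hA6
    refine ⟨2 ^ a * 3 ^ b, h6.two_pow_mul_three_pow a b, ?_, ?_⟩
    · nlinarith
    · nlinarith
  · have h6' := h6.two_pow_mul_three_pow
    interval_cases A
    · exact ⟨3, by simpa using h6' 0 1, by omega, by omega⟩
    · exact ⟨4, by simpa using h6' 2 0, by omega, by omega⟩
    · by_cases h17 : n = 17
      · subst h17
        exact ⟨5, by norm_num, by omega, by omega⟩
      · exact ⟨6, by simpa using h6' 1 1, by omega, by omega⟩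
    · exact ⟨6, by simpa using h6' 1 1, by omega, by omega⟩

lemma Nat.mod_eq_sub_of_add_modEq {n a b c : ℕ} (h : a + b ≡ c [MOD n]) (hb : b ≤ c)
    (hc : c - b < n) : a % n = c - b := by
  have : a ≡ c - b [MOD n] := Nat.ModEq.add_right_cancel' b (by rwa [Nat.sub_add_cancel hb])
  rwa [Nat.ModEq, Nat.mod_eq_of_lt hc] at this

lemma Nat.mod_eq_sub_of_dvd_add {n a b : ℕ} (h : n ∣ a + b) (hb : 0 < b) (hbn : b ≤ n) :
    a % n = n - b :=
  Nat.mod_eq_sub_of_add_modEq ((Nat.modEq_zero_iff_dvd.2 h).trans (Nat.mod_self n).symm) hbn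
    (by omega)

lemma exists_coprime_lt_mul_mod_lt_half {n y : ℕ} (h6 : Coprime n 6) (hy : 2 ≤ y)
    (hyn : y + 2 ≤ n) (hyhalf : 2 * y ≠ n + 1) :
    ∃ g, Coprime g n ∧ g < y * g % n ∧ 2 * (y * g % n) < n := by
  have hn2 := h6.mod_two_mod_three.1
  by_cases hsmall : 2 * y < n
  · refine ⟨1, Nat.coprime_one_left n, ?_⟩
    rw [mul_one, Nat.mod_eq_of_lt (by omega)]
    omega
  by_cases hsmall2 : 2 * (2 * y - n) < n
  · refine ⟨2, by simpa using h6.two_pow_mul_three_pow 1 0, ?_⟩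
    rw [show y * 2 = 2 * y - n + n by omega, Nat.add_mod_right, Nat.mod_eq_of_lt (by omega)]
    omega
  obtain ⟨z, rfl⟩ : ∃ z, n = y + z := ⟨n - y, by omega⟩
  obtain ⟨g, hgc, hg1, hg2⟩ := exists_coprime_between (z := z) h6 (by omega) (by omega)
  have hyg : y * g % (y + z) = y + z - z * g := by
    refine Nat.mod_eq_sub_of_dvd_add ⟨g, by ring⟩ ?_ ?_ <;> nlinarith
  refine ⟨g, hgc, ?_⟩
  rw [hyg]
  rw [mul_assoc] at hg1
  rw [add_one_mul] at hg2
  omega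

lemma dvd_normSum {n x1 x2 x3 x4 : ℕ} (hsum : (x1 + x2 + x3 + x4) % n = 0) (g : ℕ) :
    n ∣ normSum n g x1 x2 x3 x4 := by
  apply Nat.dvd_of_mod_eq_zero
  have : normSum n g x1 x2 x3 x4 ≡ (x1 + x2 + x3 + x4) * g [MOD n] := by
    simp only [normSum, add_mul]
    exact (((Nat.mod_modEq _ _).add (Nat.mod_modEq _ _)).add (Nat.mod_modEq _ _)).add
      (Nat.mod_modEq _ _)
  rw [this, Nat.mul_mod, hsum, zero_mul, Nat.zero_mod]

lemma normSum_one_pos {n g : ℕ} (hn : 1 < n) (hg : Coprime g n) (x2 x3 x4 : ℕ) :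
    0 < normSum n g 1 x2 x3 x4 := by
  have : g % n ≠ 0 := fun h => by
    have := hg.symm.eq_one_of_dvd (Nat.dvd_of_mod_eq_zero h)
    omega
  simp only [normSum, one_mul]
  omega

lemma seqIndex_one_eq_one {n x2 x3 x4 G : ℕ} (hn : 1 < n) (hsum : (1 + x2 + x3 + x4) % n = 0)
    (hG : G < n) (hGc : Coprime G n) (hGsum : normSum n G 1 x2 x3 x4 < 2 * n) :
    seqIndex n 1 x2 x3 x4 = 1 := by
  have hG1 : normSum n G 1 x2 x3 x4 = n :=
    Nat.eq_of_dvd_of_lt_two_mul (normSum_one_pos hn hGc x2 x3 x4).ne' (dvd_normSum hsum G) hGsum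
  have h1 : 1 ∈ {m : ℕ | ∃ g, g < n ∧ Coprime g n ∧ normSum n g 1 x2 x3 x4 = m * n} :=
    ⟨G, hG, hGc, by rw [hG1, one_mul]⟩
  refine le_antisymm (Nat.sInf_le h1) (le_csInf ⟨1, h1⟩ ?_)
  rintro m ⟨g, -, hgc, hm⟩
  have := normSum_one_pos hn hgc x2 x3 x4
  rw [hm] at this
  exact Nat.pos_of_mul_pos_right this

lemma exists_normSum_lt_of_consecutive {n x2 x4 : ℕ} (h6 : Coprime n 6)
    (hS : IsMinZS4 n 1 x2 (x2 + 1) x4) :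
    ∃ G < n, Coprime G n ∧ normSum n G 1 x2 (x2 + 1) x4 < 2 * n := by
  obtain ⟨⟨-, hn⟩, ⟨hx2, -⟩, ⟨-, hx3⟩, -, hsum, -, h13, h14, -⟩ := hS
  have hx3n : 1 + (x2 + 1) ≠ n := fun h => h13 (h ▸ Nat.mod_self n)
  have hx3half : 2 * (x2 + 1) ≠ n + 1 := fun h => h14 <| by
    rwa [show 1 + x2 + (x2 + 1) + x4 = n + (1 + x4) by omega, Nat.add_mod_left] at hsum
  obtain ⟨g, hgc, hg, hghalf⟩ :=
    exists_coprime_lt_mul_mod_lt_half h6 (by omega) (by omega) hx3half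
  have hgn : g < n := hg.trans (Nat.mod_lt _ (by omega))
  have hx2g : x2 * g % n = (x2 + 1) * g % n - g :=
    Nat.mod_eq_sub_of_add_modEq (by rw [← add_one_mul]; exact (Nat.mod_modEq _ _).symm)
      hg.le (by omega)
  refine ⟨g, hgn, hgc, ?_⟩
  have := Nat.mod_lt (x4 * g) (by omega : 0 < n)
  simp only [normSum, one_mul, Nat.mod_eq_of_lt hgn, hx2g]
  omega

lemma bounds_of_mul_mod_eq_one {n x y : ℕ} (hxy : x * y % n = 1) (hx : x < n) (hyn : y < n)
    (hx1 : x ≠ 1) (hx2 : x ≠ 2) (hxn : x + 1 ≠ n) :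
    2 ≤ y ∧ y + 2 ≤ n ∧ 2 * y ≠ n + 1 := by
  have hx0 : x ≠ 0 := by
    rintro rfl
    simp at hxy
  refine ⟨?_, ?_, fun h => hx2 ?_⟩
  · by_contra! h
    interval_cases y
    · simp at hxy
    · rw [mul_one, Nat.mod_eq_of_lt hx] at hxy
      exact hx1 hxy
  · by_contra! h
    obtain rfl : y = n - 1 := by omega
    rw [Nat.mod_eq_sub_of_dvd_add (b := x) ⟨x, ?_⟩ (by omega) hx.le] at hxy
    · omega
    · rw [← Nat.mul_add_one, Nat.sub_add_cancel (by omega), mul_comm]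
  · have h1 : x * (2 * y) ≡ x [MOD n] := by
      rw [h, Nat.mul_add_one]
      simp [Nat.ModEq]
    have h2 : x * (2 * y) ≡ 2 [MOD n] := by
      have hinv : x * y ≡ 1 [MOD n] := by rw [Nat.ModEq, hxy, Nat.mod_eq_of_lt (by omega)]
      rw [mul_left_comm]
      simpa using hinv.mul_left 2
    have := h1.symm.trans h2
    rwa [Nat.ModEq, Nat.mod_eq_of_lt hx, Nat.mod_eq_of_lt (by omega)] at this

lemma exists_normSum_lt_of_neg_two {n x3 x4 : ℕ} (h6 : Coprime n 6)
    (hS : IsMinZS4 n 1 (n - 2) x3 x4) (hc3 : Coprime x3 n) :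
    ∃ G < n, Coprime G n ∧ normSum n G 1 (n - 2) x3 x4 < 2 * n := by
  obtain ⟨⟨-, hn⟩, -, ⟨-, hx3⟩, -, -, -, h13, -, h23, -, -, h123, -⟩ := hS
  obtain ⟨y, hyn, hy⟩ := Nat.exists_mul_mod_eq_one_of_coprime hc3 hn
  obtain ⟨hy2, hyn2, hyhalf⟩ := bounds_of_mul_mod_eq_one hy hx3 hyn
    (fun h => h123 (by rw [h, show 1 + (n - 2) + 1 = n by omega, Nat.mod_self]))
    (fun h => h23 (by rw [h, show n - 2 + 2 = n by omega, Nat.mod_self]))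
    (fun h => h13 (by rw [add_comm, h, Nat.mod_self]))
  obtain ⟨g, hgc, hg, hGhalf⟩ := exists_coprime_lt_mul_mod_lt_half h6 hy2 hyn2 hyhalf
  set G := y * g % n
  have hGn : G < n := Nat.mod_lt _ (by omega)
  have hyc : Coprime y n :=
    Nat.coprime_of_mul_modEq_one x3 (by rw [Nat.ModEq, mul_comm, hy, Nat.mod_eq_of_lt hn])
  have hGc : Coprime G n := (ZMod.coprime_mod_iff_coprime _ n).2 (hyc.mul_left hgc)
  have hx2G : (n - 2) * G % n = n - 2 * G :=
    Nat.mod_eq_sub_of_dvd_add ⟨G, by rw [← add_mul, Nat.sub_add_cancel (by omega)]⟩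
      (by omega) (by omega)
  have hx3G : x3 * G % n = g := by
    have hinv : x3 * y * g ≡ 1 * g [MOD n] :=
      Nat.ModEq.mul_right g (by rw [Nat.ModEq, hy, Nat.mod_eq_of_lt hn])
    have := ((Nat.mod_modEq (y * g) n).mul_left x3).trans (mul_assoc x3 y g ▸ hinv)
    rwa [Nat.ModEq, one_mul, Nat.mod_eq_of_lt (hg.trans hGn)] at this
  refine ⟨G, hGn, hGc, ?_⟩
  have := Nat.mod_lt (x4 * G) (by omega : 0 < n)
  simp only [normSum, one_mul, Nat.mod_eq_of_lt hGn, hx2G, hx3G]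
  omega

theorem stmt_17_general (n x1 x2 x3 x4 : ℕ) (h6 : Nat.Coprime n 6)
    (hS : IsMinZS4 n x1 x2 x3 x4) (h1 : x1 = 1)
    (hc3 : Nat.Coprime x3 n)
    (hsing : x3 = x2 + 1 ∨ x2 = n - 2) :
    seqIndex n x1 x2 x3 x4 = 1 := by
  subst h1
  obtain ⟨G, hGn, hGc, hG⟩ : ∃ G < n, Coprime G n ∧ normSum n G 1 x2 x3 x4 < 2 * n := by
    rcases hsing with rfl | rfl
    · exact exists_normSum_lt_of_consecutive h6 hS
    · exact exists_normSum_lt_of_neg_two h6 hS hc3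
  obtain ⟨⟨-, hn⟩, -, -, -, hsum, -⟩ := hS
  exact seqIndex_one_eq_one hn hsum hGn hGc hG

theorem stmt_17 (n x1 x2 x3 x4 : ℕ) (hn : 0 < n) (h6 : Nat.Coprime n 6)
    (hS : IsMinZS4 n x1 x2 x3 x4) (h1 : x1 = 1)
    (hc1 : Nat.Coprime x1 n) (hc2 : Nat.Coprime x2 n)
    (hc3 : Nat.Coprime x3 n) (hc4 : Nat.Coprime x4 n)
    (hsing : x3 = x2 + 1 ∨ x2 = n - 2) :
    seqIndex n x1 x2 x3 x4 = 1 :=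
  stmt_17_general n x1 x2 x3 x4 h6 hS h1 hc3 hsing
end
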